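/- Fix μ ∈ ℝ, σ > 0, c ∈ ℝ, τ > 0 and q ∈ ℝ. Then δ² · (1 - F(δ, τ, q; μ, σ, c - δ)) tends to 0 as δ tends to +∞; i.e., when the ostracism threshold is lowered to c - δ, the probability that the agent's reputation hits c - δ before time δ is eventually smaller than 1/δ². -/

import Mathlib

open Real MeasureTheory Filter Topology

/-- Standard normal density φ(x) = exp(-x²/2)/√(2π). -/
noncomputable def stdPdf (x : ℝ) : ℝ := Real.exp (-(x ^ 2) / 2) / Real.sqrt (2 * Real.pi)

/-- Standard normal CDF Φ(x) = ∫_{-∞}^x φ(u) du. -/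
noncomputable def stdCdf (x : ℝ) : ℝ := ∫ u in Set.Iio x, stdPdf u

/-- Survival probability F(t, τ, q; μ, σ, c): the probability that the agent's
reputation does not hit the cost c before time t, given true quality q. -/
noncomputable def survF (t τ q μ σ c : ℝ) : ℝ :=
  stdCdf (Real.sqrt (t * τ) * (q - c) + (μ - c) / (σ ^ 2 * Real.sqrt (t * τ)))
    - Real.exp (-(2 / σ ^ 2) * (μ - c) * (q - c)) *
      stdCdf (Real.sqrt (t * τ) * (q - c) - (μ - c) / (σ ^ 2 * Real.sqrt (t * τ)))

/-! Write `1 - F = (1 - Φ(A)) + e^{-κ} Φ(B) ≤ (1 - Φ(A)) + e^{-κ}`. For the threshold `c - δ` both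
the point `A` and the exponent `κ` are at least `δ` once `δ` is large, and the Mills bound
`1 - Φ(x) ≤ φ(x)/x` (from `∫ₓ^∞ u φ(u) du = φ(x)`) makes the Gaussian tail at most `e^{-A}`.
Hence `1 - F ≤ 2 e^{-δ}`, which beats `δ²`. -/

lemma stdPdf_eq_exp_neg_mul_sq_div (x : ℝ) :
    stdPdf x = exp (-(1 / 2) * x ^ 2) / √(2 * π) := by
  unfold stdPdf; ring_nf

lemma stdPdf_nonneg (x : ℝ) : 0 ≤ stdPdf x := by
  unfold stdPdf; positivity

lemma stdPdf_le_exp (x : ℝ) : stdPdf x ≤ exp (-(x ^ 2) / 2) := by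
  have h_one_le : 1 ≤ √(2 * π) := by
    rw [Real.one_le_sqrt]; linarith [Real.pi_gt_three]
  exact div_le_self (exp_nonneg _) h_one_le

lemma integrable_stdPdf : Integrable stdPdf := by
  refine ((integrable_exp_neg_mul_sq (by norm_num : (0 : ℝ) < 1 / 2)).div_const
    (√(2 * π))).congr ?_
  exact .of_forall fun x => (stdPdf_eq_exp_neg_mul_sq_div x).symm

lemma integrable_mul_stdPdf : Integrable fun u => u * stdPdf u := by
  refine ((integrable_mul_exp_neg_mul_sq (by norm_num : (0 : ℝ) < 1 / 2)).div_const
    (√(2 * π))).congr ?_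
  exact .of_forall fun x => by simp only [stdPdf_eq_exp_neg_mul_sq_div, mul_div_assoc]

lemma integral_stdPdf : ∫ x, stdPdf x = 1 := by
  simp_rw [stdPdf_eq_exp_neg_mul_sq_div, integral_div, integral_gaussian]
  rw [div_eq_one_iff_eq (by positivity)]
  congr 1; ring

lemma hasDerivAt_stdPdf (x : ℝ) : HasDerivAt stdPdf (-x * stdPdf x) x := by
  have h_exponent : HasDerivAt (fun y : ℝ => -(y ^ 2) / 2) (-x) x :=
    ((hasDerivAt_pow 2 x).neg.div_const 2).congr_deriv (by push_cast; ring)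
  exact (h_exponent.exp.div_const (√(2 * π))).congr_deriv (by unfold stdPdf; ring)

lemma tendsto_stdPdf_atTop : Tendsto stdPdf atTop (𝓝 0) := by
  have h_exponent : Tendsto (fun x : ℝ => -(x ^ 2) / 2) atTop atBot :=
    (tendsto_neg_atBot_iff.mpr (tendsto_pow_atTop two_ne_zero)).atBot_div_const two_pos
  have h := (tendsto_exp_atBot.comp h_exponent).div_const (√(2 * π))
  rwa [zero_div] at h

lemma stdCdf_nonneg (x : ℝ) : 0 ≤ stdCdf x :=
  setIntegral_nonneg measurableSet_Iio fun u _ => stdPdf_nonneg u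

lemma one_sub_stdCdf (x : ℝ) : 1 - stdCdf x = ∫ u in Set.Ioi x, stdPdf u := by
  have h := intervalIntegral.integral_Iio_add_Ici (b := x) (μ := volume)
    integrable_stdPdf.integrableOn integrable_stdPdf.integrableOn
  rw [integral_stdPdf, integral_Ici_eq_integral_Ioi] at h
  unfold stdCdf
  linarith

lemma stdCdf_le_one (x : ℝ) : stdCdf x ≤ 1 := by
  have h_tail : 0 ≤ ∫ u in Set.Ioi x, stdPdf u :=
    setIntegral_nonneg measurableSet_Ioi fun u _ => stdPdf_nonneg u
  linarith [one_sub_stdCdf x]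

lemma integral_Ioi_mul_stdPdf (x : ℝ) : ∫ u in Set.Ioi x, u * stdPdf u = stdPdf x := by
  have h_deriv : ∀ u ∈ Set.Ici x, HasDerivAt (-stdPdf) (u * stdPdf u) u :=
    fun u _ => (hasDerivAt_stdPdf u).neg.congr_deriv (by ring)
  rw [integral_Ioi_of_hasDerivAt_of_tendsto' h_deriv integrable_mul_stdPdf.integrableOn
    tendsto_stdPdf_atTop.neg]
  simp

lemma one_sub_stdCdf_le_stdPdf_div {x : ℝ} (hx : 0 < x) : 1 - stdCdf x ≤ stdPdf x / x := by
  rw [one_sub_stdCdf, ← integral_Ioi_mul_stdPdf, ← integral_div]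
  refine setIntegral_mono_on integrable_stdPdf.integrableOn
    (integrable_mul_stdPdf.div_const x).integrableOn measurableSet_Ioi fun u hu => ?_
  rw [le_div_iff₀ hx, mul_comm u]
  exact mul_le_mul_of_nonneg_left (le_of_lt hu) (stdPdf_nonneg u)

lemma one_sub_stdCdf_le_exp_neg {x : ℝ} (hx : 2 ≤ x) : 1 - stdCdf x ≤ exp (-x) :=
  calc 1 - stdCdf x ≤ stdPdf x / x := one_sub_stdCdf_le_stdPdf_div (by linarith)
    _ ≤ stdPdf x := div_le_self (stdPdf_nonneg x) (by linarith)
    _ ≤ exp (-(x ^ 2) / 2) := stdPdf_le_exp x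
    _ ≤ exp (-x) := exp_le_exp.mpr (by nlinarith)

lemma one_sub_survF_nonneg (t τ q μ σ c : ℝ) : 0 ≤ 1 - survF t τ q μ σ c := by
  unfold survF
  nlinarith [stdCdf_le_one (√(t * τ) * (q - c) + (μ - c) / (σ ^ 2 * √(t * τ))),
    mul_nonneg (exp_nonneg (-(2 / σ ^ 2) * (μ - c) * (q - c)))
      (stdCdf_nonneg (√(t * τ) * (q - c) - (μ - c) / (σ ^ 2 * √(t * τ))))]

lemma one_sub_survF_le (t τ q μ σ c : ℝ) :
    1 - survF t τ q μ σ c ≤ (1 - stdCdf (√(t * τ) * (q - c) + (μ - c) / (σ ^ 2 * √(t * τ))))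
      + exp (-(2 / σ ^ 2 * (μ - c) * (q - c))) := by
  unfold survF
  rw [← neg_mul, ← neg_mul]
  nlinarith [exp_nonneg (-(2 / σ ^ 2) * (μ - c) * (q - c)),
    stdCdf_le_one (√(t * τ) * (q - c) - (μ - c) / (σ ^ 2 * √(t * τ)))]

section LoweredThreshold

variable (μ σ c τ q : ℝ)

lemma eventually_le_survF_arg (hτ : 0 < τ) : ∀ᶠ δ in atTop,
    δ ≤ √(δ * τ) * (q - (c - δ)) + (μ - (c - δ)) / (σ ^ 2 * √(δ * τ)) := by
  filter_upwards [eventually_ge_atTop 0, eventually_ge_atTop (4 / τ),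
    eventually_ge_atTop (2 * (c - q)), eventually_ge_atTop (2 * (c - μ))] with δ hδ hδτ hδq hδμ
  have h_sqrt : 2 ≤ √(δ * τ) := by
    rw [Real.le_sqrt' two_pos]; linarith [(div_le_iff₀ hτ).mp hδτ]
  have h_drift : δ ≤ √(δ * τ) * (q - (c - δ)) := by nlinarith
  have h_bias : 0 ≤ (μ - (c - δ)) / (σ ^ 2 * √(δ * τ)) := by
    apply div_nonneg <;> [linarith; positivity]
  linarith

lemma eventually_le_survF_exponent (hσ : 0 < σ) : ∀ᶠ δ in atTop,
    δ ≤ 2 / σ ^ 2 * (μ - (c - δ)) * (q - (c - δ)) := by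
  filter_upwards [eventually_ge_atTop 0, eventually_ge_atTop (2 * σ ^ 2),
    eventually_ge_atTop (2 * (c - q)), eventually_ge_atTop (2 * (c - μ))] with δ hδ hδσ hδq hδμ
  have hσ2 : 0 < σ ^ 2 := by positivity
  have h_prod : δ * δ ≤ 4 * ((μ - (c - δ)) * (q - (c - δ))) := by nlinarith
  rw [mul_assoc, div_mul_eq_mul_div, le_div_iff₀ hσ2]
  nlinarith

lemma eventually_one_sub_survF_le (hσ : 0 < σ) (hτ : 0 < τ) :
    ∀ᶠ δ in atTop, 1 - survF δ τ q μ σ (c - δ) ≤ 2 * exp (-δ) := by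
  filter_upwards [eventually_le_survF_arg μ σ c τ q hτ,
    eventually_le_survF_exponent μ σ c q hσ, eventually_ge_atTop 2] with δ h_arg h_exp hδ
  have h_tail := one_sub_stdCdf_le_exp_neg (hδ.trans h_arg)
  have h_arg_exp : exp (-(√(δ * τ) * (q - (c - δ)) + (μ - (c - δ)) / (σ ^ 2 * √(δ * τ))))
      ≤ exp (-δ) := exp_le_exp.mpr (neg_le_neg h_arg)
  linarith [one_sub_survF_le δ τ q μ σ (c - δ), exp_le_exp.mpr (neg_le_neg h_exp)]

end LoweredThreshold

/-- δ²·(1 - F(δ, τ, q; μ, σ, c - δ)) → 0 as δ → ∞. -/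
theorem stmt_17 (μ σ c τ q : ℝ) (hσ : 0 < σ) (hτ : 0 < τ) :
    Tendsto (fun δ : ℝ => δ ^ 2 * (1 - survF δ τ q μ σ (c - δ))) atTop (𝓝 0) := by
  have h_upper : Tendsto (fun δ : ℝ => 2 * (δ ^ 2 * exp (-δ))) atTop (𝓝 0) := by
    simpa using (tendsto_pow_mul_exp_neg_atTop_nhds_zero 2).const_mul 2
  refine tendsto_of_tendsto_of_tendsto_of_le_of_le' tendsto_const_nhds h_upper
    (.of_forall fun δ => mul_nonneg (sq_nonneg δ) (one_sub_survF_nonneg _ _ _ _ _ _)) ?_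
  filter_upwards [eventually_one_sub_survF_le μ σ c τ q hσ hτ] with δ h
  calc δ ^ 2 * (1 - survF δ τ q μ σ (c - δ)) ≤ δ ^ 2 * (2 * exp (-δ)) :=
        mul_le_mul_of_nonneg_left h (sq_nonneg δ)
    _ = 2 * (δ ^ 2 * exp (-δ)) := by ring
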